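/- Let n ≥ 1, S = ℚ[x_1,…,x_n], and let M_n ⊆ S^{n+1} be the spline module of the fan of ℙ^n. Then M_n, with componentwise ring operations, is a ℚ-subalgebra of S^{n+1}, and it is isomorphic as a ℚ-algebra to the Stanley–Reisner ring ℚ[y_0, y_1, …, y_n]/⟨y_0·y_1⋯y_n⟩ of the fan of ℙ^n, via an isomorphism sending each y_i to a tuple all of whose components are homogeneous of degree 1. -/
import Mathlib


open MvPolynomial

/-- The ring `S = ℚ[x_1,…,x_n]`. -/
abbrev S (n : ℕ) : Type := MvPolynomial (Fin n) ℚ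

/-- The spline module `M_n = C^0(P_1(A_n)) ⊆ S^{n+1}` of the fan of `ℙ^n`, viewed as a
`ℚ`-subalgebra of `S^{n+1}` (with componentwise operations): tuples `(f_0, f_1, …, f_n)`
with `x_i ∣ f_0 - f_i` for `1 ≤ i ≤ n` and `x_i - x_j ∣ f_i - f_j` for `1 ≤ i < j ≤ n`. -/
noncomputable def splineAlgebra (n : ℕ) : Subalgebra ℚ (Fin (n + 1) → S n) where
  carrier := {f | (∀ i : Fin n, X i ∣ f 0 - f i.succ) ∧
    ∀ i j : Fin n, i < j → (X i - X j) ∣ f i.succ - f j.succ}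
  add_mem' := by
    rintro a b ⟨ha1, ha2⟩ ⟨hb1, hb2⟩
    refine ⟨fun i => ?_, fun i j hij => ?_⟩
    · simpa [sub_add_sub_comm] using dvd_add (ha1 i) (hb1 i)
    · simpa [sub_add_sub_comm] using dvd_add (ha2 i j hij) (hb2 i j hij)
  mul_mem' := by
    rintro a b ⟨ha1, ha2⟩ ⟨hb1, hb2⟩
    refine ⟨fun i => ?_, fun i j hij => ?_⟩
    · have h := dvd_add ((hb1 i).mul_left (a 0)) ((ha1 i).mul_left (b i.succ))
      convert h using 1
      simp only [Pi.mul_apply]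
      ring
    · have h := dvd_add ((hb2 i j hij).mul_left (a i.succ)) ((ha2 i j hij).mul_left (b j.succ))
      convert h using 1
      simp only [Pi.mul_apply]
      ring
  one_mem' := by
    refine ⟨fun i => ?_, fun i j _ => ?_⟩ <;> simp
  zero_mem' := by
    refine ⟨fun i => ?_, fun i j _ => ?_⟩ <;> simp
  algebraMap_mem' := by
    intro r
    refine ⟨fun i => ?_, fun i j _ => ?_⟩ <;> simp


lemma prod_X_sub_C_dvd_of_eval_eq_zero {R : Type*} [CommRing R] [IsDomain R]
    (p : Polynomial R) (s : Finset R) (h : ∀ a ∈ s, p.eval a = 0) :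
    (∏ a ∈ s, (Polynomial.X - Polynomial.C a)) ∣ p := by
  classical
  by_cases hp : p = 0
  · simp [hp]
  · have hle : s.val ≤ p.roots := by
      rw [Multiset.le_iff_count]
      intro a
      by_cases ha : a ∈ s
      · have h1 : s.val.count a = 1 := Multiset.count_eq_one_of_mem s.nodup ha
        rw [h1, Polynomial.count_roots]
        exact (Polynomial.rootMultiplicity_pos hp).2 (h a ha)
      · simp [Multiset.count_eq_zero_of_notMem, ha]
    have := (Multiset.prod_X_sub_C_dvd_iff_le_roots hp s.val).2 hle
    have heq : (∏ a ∈ s, (Polynomial.X - Polynomial.C a)) =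
        (Multiset.map (fun a => Polynomial.X - Polynomial.C a) s.val).prod :=
      Finset.prod_eq_multiset_prod s _
    rw [heq]
    exact this

noncomputable section

/-- `xx 0 = 0`, `xx i.succ = X i`. -/
def xx (n : ℕ) : Fin (n + 1) → S n := Fin.cases 0 X

@[simp] lemma xx_zero (n : ℕ) : xx n 0 = 0 := rfl
@[simp] lemma xx_succ (n : ℕ) (i : Fin n) : xx n i.succ = X i := rfl

lemma xx_injective (n : ℕ) : Function.Injective (xx n) := by
  intro i j hij
  induction i using Fin.cases <;> induction j using Fin.cases <;>
    simp_all [eq_comm, X_injective.eq_iff]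

/-- Isolating the variable `a`. -/
def sep {n : ℕ} (a : Fin n) :
    S n ≃ₐ[ℚ] Polynomial (MvPolynomial {b : Fin n // b ≠ a} ℚ) :=
  (renameEquiv ℚ (Equiv.optionSubtypeNe a).symm).trans (optionEquivLeft ℚ _)

@[simp] lemma sep_X_self {n : ℕ} (a : Fin n) : sep a (X a) = Polynomial.X := by
  simp [sep, Equiv.optionSubtypeNe_symm_self, optionEquivLeft_X_none]

@[simp] lemma sep_X_ne {n : ℕ} (a : Fin n) (b : Fin n) (h : b ≠ a) :
    sep a (X b) = Polynomial.C (X ⟨b, h⟩) := by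
  simp [sep, Equiv.optionSubtypeNe_symm_of_ne h, optionEquivLeft_X_some]

/-- The constant corresponding to `xx i` under `sep a`. -/
def cc {n : ℕ} (a : Fin n) : Fin (n + 1) → MvPolynomial {b : Fin n // b ≠ a} ℚ :=
  Fin.cases 0 (fun b => if h : b = a then 0 else X ⟨b, h⟩)

lemma sep_xx {n : ℕ} (a : Fin n) (i : Fin (n + 1)) (hi : i ≠ a.succ) :
    sep a (xx n i) = Polynomial.C (cc a i) := by
  induction i using Fin.cases with
  | zero => simp [cc]
  | succ b =>
    have hb : b ≠ a := fun h => hi (by rw [h])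
    simp [cc, hb]

lemma cc_injOn {n : ℕ} (a : Fin n) {i j : Fin (n + 1)} (hi : i ≠ a.succ) (hj : j ≠ a.succ)
    (h : cc a i = cc a j) : i = j := by
  have := congrArg Polynomial.C h
  rw [← sep_xx a i hi, ← sep_xx a j hj] at this
  exact xx_injective n ((sep a).injective this)

/-- pairwise divisibility by distinct linear forms `xx K - xx i` implies divisibility
by their product. -/
lemma prod_xx_dvd {n : ℕ} (K : Fin (n + 1)) (hK : K ≠ 0) (t : Finset (Fin (n + 1)))
    (ht : K ∉ t) (f : S n) (hdvd : ∀ i ∈ t, (xx n K - xx n i) ∣ f) :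
    (∏ i ∈ t, (xx n K - xx n i)) ∣ f := by
  classical
  obtain ⟨a, rfl⟩ : ∃ a : Fin n, K = a.succ := ⟨K.pred hK, (Fin.succ_pred K hK).symm⟩
  have hsepfac : ∀ i ∈ t, sep a (xx n a.succ - xx n i)
      = Polynomial.X - Polynomial.C (cc a i) := by
    intro i hit
    rw [map_sub, sep_xx a i (fun h => ht (h ▸ hit)), xx_succ, sep_X_self]
  have heval : ∀ r ∈ t.image (cc a), Polynomial.eval r (sep a f) = 0 := by
    intro r hr
    obtain ⟨i, hit, rfl⟩ := Finset.mem_image.1 hr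
    have : (Polynomial.X - Polynomial.C (cc a i)) ∣ sep a f := by
      rw [← hsepfac i hit]
      exact map_dvd _ (hdvd i hit)
    exact Polynomial.eval_eq_zero_of_dvd_of_eval_eq_zero this (by
      rw [Polynomial.eval_sub, Polynomial.eval_X, Polynomial.eval_C, sub_self])
  have hmain := prod_X_sub_C_dvd_of_eval_eq_zero (sep a f) (t.image (cc a)) heval
  rw [Finset.prod_image (fun i hi j hj h =>
      cc_injOn a (fun hh => ht (hh ▸ hi)) (fun hh => ht (hh ▸ hj)) h)] at hmain
  have : sep a (∏ i ∈ t, (xx n a.succ - xx n i)) ∣ sep a f := by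
    rw [map_prod]
    exact (Finset.prod_congr rfl hsepfac) ▸ hmain
  have h2 := map_dvd (sep a).symm this
  rwa [AlgEquiv.symm_apply_apply, AlgEquiv.symm_apply_apply] at h2

/-- The Courant splines: `gg 0 = xx`, and `gg i.succ j = X i - xx j`. -/
def gg (n : ℕ) : Fin (n + 1) → (Fin (n + 1) → S n) :=
  Fin.cases (xx n) (fun i => fun j => X i - xx n j)

@[simp] lemma gg_zero (n : ℕ) : gg n 0 = xx n := rfl
@[simp] lemma gg_succ (n : ℕ) (i : Fin n) : gg n i.succ = fun j => X i - xx n j := rfl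

lemma mem_splineAlgebra {n : ℕ} (f : Fin (n + 1) → S n) :
    f ∈ splineAlgebra n ↔ ((∀ i : Fin n, X i ∣ f 0 - f i.succ) ∧
      ∀ i j : Fin n, i < j → (X i - X j) ∣ f i.succ - f j.succ) := Iff.rfl

lemma gg_mem (n : ℕ) (i : Fin (n + 1)) : gg n i ∈ splineAlgebra n := by
  rw [mem_splineAlgebra]
  induction i using Fin.cases with
  | zero =>
    refine ⟨fun i => ?_, fun i j _ => ?_⟩
    · simp [dvd_neg]
    · simp
  | succ k =>
    refine ⟨fun i => ?_, fun i j _ => ?_⟩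
    · simpa using dvd_refl (X i)
    · have : (X k - xx n i.succ) - (X k - xx n j.succ) = -(X i - X j) := by
        simp only [xx_succ]
        ring
      simp only [gg_succ, this]
      exact dvd_neg.2 dvd_rfl

lemma gg_apply_homog (n : ℕ) (i : Fin (n + 1)) (j : Fin (n + 1)) :
    (gg n i j).IsHomogeneous 1 := by
  have hxx : ∀ j : Fin (n + 1), (xx n j).IsHomogeneous 1 := by
    intro j
    induction j using Fin.cases with
    | zero => simpa using isHomogeneous_zero (Fin n) ℚ 1
    | succ b => simpa using isHomogeneous_X ℚ b
  induction i using Fin.cases with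
  | zero => exact hxx j
  | succ k => exact (isHomogeneous_X ℚ k).sub (hxx j)

/-- Change of variables `ℚ[y_0,…,y_n] ≃ ℚ[x_1,…,x_n][T]`, `y_0 ↦ T`, `y_{i+1} ↦ x_{i+1} - T`. -/
def toPoly (n : ℕ) : MvPolynomial (Fin (n + 1)) ℚ ≃ₐ[ℚ] Polynomial (S n) :=
  AlgEquiv.ofAlgHom
    (aeval (Fin.cases Polynomial.X (fun i => Polynomial.C (X i) - Polynomial.X)))
    (Polynomial.aevalTower (aeval (fun i : Fin n => X i.succ + X 0)) (X 0))
    (by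
      apply Polynomial.algHom_ext'
      · apply MvPolynomial.algHom_ext
        intro i
        simp [Polynomial.aevalTower_C, aeval_X, Fin.cases_succ]
      · simp [Polynomial.aevalTower_X, aeval_X])
    (by
      apply MvPolynomial.algHom_ext
      intro i
      induction i using Fin.cases with
      | zero => simp [Polynomial.aevalTower_X, aeval_X]
      | succ k => simp [Polynomial.aevalTower_C, Polynomial.aevalTower_X, aeval_X])

@[simp] lemma toPoly_X_zero (n : ℕ) : toPoly n (X 0) = Polynomial.X := by
  simp [toPoly, AlgEquiv.ofAlgHom, aeval_X]

@[simp] lemma toPoly_X_succ (n : ℕ) (i : Fin n) :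
    toPoly n (X i.succ) = Polynomial.C (X i) - Polynomial.X := by
  simp [toPoly, AlgEquiv.ofAlgHom, aeval_X]

lemma aeval_gg_apply (n : ℕ) (P : MvPolynomial (Fin (n + 1)) ℚ) (j : Fin (n + 1)) :
    aeval (gg n) P j = Polynomial.eval (xx n j) (toPoly n P) := by
  have h : (Pi.evalAlgHom ℚ (fun _ : Fin (n + 1) => S n) j).comp (aeval (gg n)) =
      ((Polynomial.aeval (xx n j)).restrictScalars ℚ).comp (toPoly n).toAlgHom := by
    apply MvPolynomial.algHom_ext
    intro i
    induction i using Fin.cases with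
    | zero => simp [aeval_X]
    | succ k => simp [aeval_X]
  exact congrFun (congrArg (fun (F : _ →ₐ[ℚ] S n) => (F : _ → S n)) h) P

lemma aeval_gg_prod (n : ℕ) :
    aeval (gg n) (∏ i : Fin (n + 1), (X i : MvPolynomial (Fin (n + 1)) ℚ)) = 0 := by
  rw [map_prod]
  simp only [aeval_X]
  funext j
  rw [Finset.prod_apply, Pi.zero_apply]
  induction j using Fin.cases with
  | zero =>
    apply Finset.prod_eq_zero (Finset.mem_univ (0 : Fin (n + 1)))
    simp
  | succ k =>
    apply Finset.prod_eq_zero (Finset.mem_univ k.succ)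
    simp

lemma prod_dvd_of_aeval_gg_eq_zero (n : ℕ) (P : MvPolynomial (Fin (n + 1)) ℚ)
    (hP : aeval (gg n) P = 0) : (∏ i : Fin (n + 1), X i) ∣ P := by
  classical
  have heval : ∀ a ∈ Finset.univ.image (xx n), Polynomial.eval a (toPoly n P) = 0 := by
    intro a ha
    obtain ⟨j, _, rfl⟩ := Finset.mem_image.1 ha
    rw [← aeval_gg_apply, hP, Pi.zero_apply]
  have hdvd := prod_X_sub_C_dvd_of_eval_eq_zero (toPoly n P) _ heval
  rw [Finset.prod_image (fun i _ j _ h => xx_injective n h)] at hdvd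
  have hprod : toPoly n (∏ i : Fin (n + 1), X i) =
      (-1 : Polynomial (S n)) ^ n *
        ∏ j : Fin (n + 1), (Polynomial.X - Polynomial.C (xx n j)) := by
    rw [map_prod, Fin.prod_univ_succ, Fin.prod_univ_succ]
    simp only [toPoly_X_zero, toPoly_X_succ, xx_zero, xx_succ, map_zero, sub_zero]
    have hstep : ∀ i : Fin n, (Polynomial.C (X i : S n) - Polynomial.X)
        = (-1) * (Polynomial.X - Polynomial.C (X i : S n)) := by intro i; ring
    rw [Finset.prod_congr rfl (fun i _ => hstep i), Finset.prod_mul_distrib,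
      Finset.prod_const, Finset.card_univ, Fintype.card_fin]
    ring
  obtain ⟨h, hh⟩ := hdvd
  have hone : ((-1 : Polynomial (S n)) ^ n) * ((-1 : Polynomial (S n)) ^ n) = 1 := by
    rw [← pow_add, show n + n = 2 * n from (two_mul n).symm, pow_mul]
    norm_num
  have : toPoly n (∏ i : Fin (n + 1), X i) ∣ toPoly n P := by
    refine ⟨(-1 : Polynomial (S n)) ^ n * h, ?_⟩
    calc toPoly n P
        = (∏ j : Fin (n + 1), (Polynomial.X - Polynomial.C (xx n j))) * h := hh
      _ = ((-1 : Polynomial (S n)) ^ n * (-1 : Polynomial (S n)) ^ n) *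
          ((∏ j : Fin (n + 1), (Polynomial.X - Polynomial.C (xx n j))) * h) := by
          rw [hone, one_mul]
      _ = toPoly n (∏ i : Fin (n + 1), X i) * ((-1 : Polynomial (S n)) ^ n * h) := by
          rw [hprod]; ring
  have h2 := map_dvd (toPoly n).symm this
  rwa [AlgEquiv.symm_apply_apply, AlgEquiv.symm_apply_apply] at h2

lemma aeval_gg_mem (n : ℕ) (P : MvPolynomial (Fin (n + 1)) ℚ) :
    aeval (gg n) P ∈ splineAlgebra n := by
  induction P using MvPolynomial.induction_on with
  | C q => rw [aeval_C]; exact (splineAlgebra n).algebraMap_mem q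
  | add p q hp hq => rw [map_add]; exact add_mem hp hq
  | mul_X p i hp => rw [map_mul, aeval_X]; exact mul_mem hp (gg_mem n i)

lemma diag_mem_range (n : ℕ) (r : S n) :
    (fun _ => r : Fin (n + 1) → S n) ∈
      (aeval (gg n) : MvPolynomial (Fin (n + 1)) ℚ →ₐ[ℚ] (Fin (n + 1) → S n)).range := by
  induction r using MvPolynomial.induction_on with
  | C q =>
    refine ⟨C q, ?_⟩
    show (aeval (gg n)) (C q) = _
    rw [aeval_C]
    funext j
    simp [MvPolynomial.algebraMap_eq]
  | add p q hp hq =>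
    obtain ⟨P, hP⟩ := hp
    obtain ⟨Q, hQ⟩ := hq
    refine ⟨P + Q, ?_⟩
    show (aeval (gg n)) (P + Q) = _
    rw [map_add]
    rw [show ((aeval (gg n)) P : Fin (n + 1) → S n) = fun _ => p from hP,
      show ((aeval (gg n)) Q : Fin (n + 1) → S n) = fun _ => q from hQ]
    funext j
    simp
  | mul_X p i hp =>
    obtain ⟨P, hP⟩ := hp
    refine ⟨P * (X i.succ + X 0), ?_⟩
    show (aeval (gg n)) (P * (X i.succ + X 0)) = _
    rw [map_mul, map_add, aeval_X, aeval_X,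
      show ((aeval (gg n)) P : Fin (n + 1) → S n) = fun _ => p from hP]
    funext j
    simp only [Pi.mul_apply, Pi.add_apply, gg_succ, gg_zero]
    ring

lemma spline_mem_range (n : ℕ) (d : ℕ) : ∀ (f : Fin (n + 1) → S n), f ∈ splineAlgebra n →
    (∀ j : Fin (n + 1), (j : ℕ) < (n + 1) - d → f j = 0) →
    f ∈ (aeval (gg n) : MvPolynomial (Fin (n + 1)) ℚ →ₐ[ℚ] (Fin (n + 1) → S n)).range := by
  classical
  induction d with
  | zero =>
    intro f _ h0
    have : f = 0 := funext fun j => h0 j (by omega)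
    rw [this]
    exact zero_mem _
  | succ d ih =>
    intro f hf h0
    obtain ⟨K, hKval⟩ : ∃ K : Fin (n + 1), (K : ℕ) = n - d := ⟨⟨n - d, by omega⟩, rfl⟩
    set t : Finset (Fin (n + 1)) := Finset.univ.filter (fun i => i < K) with htt
    have hKt : K ∉ t := by simp [htt]
    have hfK0 : ∀ i : Fin (n + 1), i < K → f i = 0 := by
      intro i hiK
      exact h0 i (by
        have h1 : (i : ℕ) < (K : ℕ) := hiK
        omega)
    have hdvd : ∀ i ∈ t, (xx n K - xx n i) ∣ f K := by
      intro i hit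
      have hiK : i < K := (Finset.mem_filter.1 hit).2
      have hfi : f i = 0 := hfK0 i hiK
      have hKne : K ≠ 0 := by
        intro h
        rw [h] at hiK
        exact Fin.not_lt_zero i hiK
      obtain ⟨b, hKb⟩ : ∃ b : Fin n, K = b.succ :=
        ⟨K.pred hKne, (Fin.succ_pred K hKne).symm⟩
      rcases Fin.eq_zero_or_eq_succ i with hi0 | ⟨a, rfl⟩
      · subst hi0
        rw [hKb]
        have h1 := hf.1 b
        rw [hfi, zero_sub] at h1
        simpa using (dvd_neg.1 h1)
      · rw [hKb] at hiK ⊢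
        have hab : a < b := by
          rwa [Fin.succ_lt_succ_iff] at hiK
        have h1 := hf.2 a b hab
        rw [hfi, zero_sub] at h1
        have h2 : (X a - X b : S n) ∣ f b.succ := dvd_neg.1 h1
        have h3 : (xx n b.succ - xx n a.succ) = -(X a - X b : S n) := by
          simp only [xx_succ]; ring
        rw [h3]
        exact (neg_dvd).2 h2
    have hw : (∏ i ∈ t, (xx n K - xx n i)) ∣ f K := by
      by_cases hK0 : K = 0
      · have ht0 : t = ∅ := by
          rw [htt, hK0]
          simp [Fin.not_lt_zero]
        rw [ht0]
        simp
      · exact prod_xx_dvd K hK0 t hKt (f K) hdvd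
    obtain ⟨c, hc⟩ := hw
    set B : Fin (n + 1) → S n := fun j => ∏ i ∈ t, (xx n j - xx n i) with hB
    have hBrange : B ∈ (aeval (gg n) : MvPolynomial (Fin (n + 1)) ℚ →ₐ[ℚ]
        (Fin (n + 1) → S n)).range := by
      have : B = ∏ i ∈ t, (gg n 0 - (fun _ => xx n i)) := by
        funext j
        rw [Finset.prod_apply]
        rfl
      rw [this]
      apply prod_mem
      intro i _
      refine sub_mem ⟨X 0, ?_⟩ (diag_mem_range n (xx n i))
      show (aeval (gg n)) (X 0) = gg n 0
      rw [aeval_X]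
    have hcB : (fun _ => c : Fin (n + 1) → S n) * B ∈
        (aeval (gg n) : MvPolynomial (Fin (n + 1)) ℚ →ₐ[ℚ] (Fin (n + 1) → S n)).range :=
      mul_mem (diag_mem_range n c) hBrange
    have hcBspline : (fun _ => c : Fin (n + 1) → S n) * B ∈ splineAlgebra n := by
      obtain ⟨Q, hQ⟩ := hcB
      rw [← hQ]
      exact aeval_gg_mem n Q
    have hf' : f - (fun _ => c) * B ∈ (aeval (gg n) : MvPolynomial (Fin (n + 1)) ℚ →ₐ[ℚ]
        (Fin (n + 1) → S n)).range := by
      apply ih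
      · exact sub_mem hf hcBspline
      · intro j hj
        have hj' : (j : ℕ) ≤ n - d := by omega
        simp only [Pi.sub_apply, Pi.mul_apply]
        rcases lt_or_eq_of_le hj' with hlt | heq
        · have hjK : j < K := by
            rw [Fin.lt_def]
            omega
          have hBj : B j = 0 := by
            apply Finset.prod_eq_zero (i := j)
            · rw [htt]
              simp [hjK]
            · rw [sub_self]
          rw [hfK0 j hjK, hBj, mul_zero, sub_zero]
        · have hjK : j = K := by
            apply Fin.ext
            rw [heq, hKval]
          rw [hjK, hc]
          have : B K = ∏ i ∈ t, (xx n K - xx n i) := rfl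
          rw [this]
          ring
    have : f = (f - (fun _ => c) * B) + (fun _ => c) * B := by ring
    rw [this]
    exact add_mem hf' hcB

end

/-- The Stanley–Reisner ring `ℚ[y_0, …, y_n]/⟨y_0 ⋯ y_n⟩` of the fan of `ℙ^n`. -/
abbrev stanleyReisner (n : ℕ) : Type :=
  MvPolynomial (Fin (n + 1)) ℚ ⧸
    (Ideal.span {∏ i : Fin (n + 1), X i} : Ideal (MvPolynomial (Fin (n + 1)) ℚ))

/-- **Theorem (Billera / Brion for `ℙⁿ`)**: `C^0(P_1(A_n))` is a `ℚ`-subalgebra of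
`S^{n+1}`, isomorphic as a `ℚ`-algebra to the Stanley–Reisner ring
`ℚ[y_0,…,y_n]/⟨y_0⋯y_n⟩`, via an isomorphism sending each `y_i` to a tuple all of
whose components are homogeneous of degree `1`. -/
theorem spline_algebra_iso_stanleyReisner (n : ℕ) (hn : 1 ≤ n) :
    ∃ e : stanleyReisner n ≃ₐ[ℚ] splineAlgebra n,
      ∀ i : Fin (n + 1), ∀ j : Fin (n + 1),
        ((e (Ideal.Quotient.mk _ (X i)) : Fin (n + 1) → S n) j).IsHomogeneous 1 := by
  classical
  set Φ' : MvPolynomial (Fin (n + 1)) ℚ →ₐ[ℚ] splineAlgebra n :=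
    aeval (fun i => (⟨gg n i, gg_mem n i⟩ : splineAlgebra n)) with hPhi
  have hcoe : ∀ P, ((Φ' P : splineAlgebra n) : Fin (n + 1) → S n) = aeval (gg n) P := by
    intro P
    have h : (splineAlgebra n).val.comp Φ' = aeval (gg n) := by
      apply MvPolynomial.algHom_ext
      intro i
      simp [hPhi, aeval_X]
    calc ((Φ' P : splineAlgebra n) : Fin (n + 1) → S n)
        = ((splineAlgebra n).val.comp Φ') P := rfl
      _ = aeval (gg n) P := by rw [h]
  have hker : RingHom.ker Φ' = Ideal.span {∏ i : Fin (n + 1), X i} := by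
    ext P
    rw [RingHom.mem_ker, Ideal.mem_span_singleton]
    constructor
    · intro h
      apply prod_dvd_of_aeval_gg_eq_zero
      rw [← hcoe]
      rw [show Φ' P = 0 from h]
      rfl
    · rintro ⟨c, rfl⟩
      have h0 : aeval (gg n) ((∏ i : Fin (n + 1), X i) * c) = 0 := by
        rw [map_mul, aeval_gg_prod, zero_mul]
      apply Subtype.ext
      rw [hcoe]
      exact h0
  have hsurj : Function.Surjective Φ' := by
    rintro ⟨f, hf⟩
    obtain ⟨P, hP⟩ := spline_mem_range n (n + 1) f hf (fun j hj => absurd hj (by omega))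
    exact ⟨P, Subtype.ext (by rw [hcoe]; exact hP)⟩
  refine ⟨(Ideal.quotientEquivAlgOfEq ℚ hker.symm).trans
    (Ideal.quotientKerAlgEquivOfSurjective hsurj), ?_⟩
  intro i j
  have heq : ((Ideal.quotientEquivAlgOfEq ℚ hker.symm).trans
      (Ideal.quotientKerAlgEquivOfSurjective hsurj)) (Ideal.Quotient.mk _ (X i)) = Φ' (X i) := by
    rw [AlgEquiv.trans_apply, Ideal.quotientEquivAlgOfEq_mk]
    rfl
  rw [heq, hPhi, aeval_X]
  exact gg_apply_homog n i j
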